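/- Let L > 0 and σ ∈ {1, −1}. (a) Let H₃₄ be the real 4×4 matrix with rows: (−31/(192L⁷), −73/(192L⁷), 9√3σ/(64L⁷), 15√3σ/(64L⁷)); (−73/(192L⁷), −31/(192L⁷), 15√3σ/(64L⁷), 9√3σ/(64L⁷)); (9√3σ/(64L⁷), 15√3σ/(64L⁷), −85/(192L⁷), −163/(192L⁷)); (15√3σ/(64L⁷), 9√3σ/(64L⁷), −163/(192L⁷), −85/(192L⁷)). Then det(H₃₄) = 5/(288 L²⁸). (b) Let H₅₆ be the real 4×4 matrix with rows: (−107/(192L⁷), −29/(192L⁷), 37σ/(64√3 L⁷), 19σ/(64√3 L⁷)); (−29/(192L⁷), −107/(192L⁷), 19σ/(64√3 L⁷), 37σ/(64√3 L⁷)); (37σ/(64√3 L⁷), 19σ/(64√3 L⁷), −11/(64L⁷), 3/(64L⁷)); (19σ/(64√3 L⁷), 37σ/(64√3 L⁷), 3/(64L⁷), −11/(64L⁷)). Then det(H₅₆) = −1/(96 L²⁸). In particular det(H₃₄) = −(5/3)·det(H₅₆) ≠ 0. -/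

import Mathlib

open Real Matrix

/-- The Hessian matrix `H_{3,4}` at the polar relative equilibria `E₃, E₄`. -/
noncomputable def H34 (L σ : ℝ) : Matrix (Fin 4) (Fin 4) ℝ :=
  !![-31 / (192 * L ^ 7), -73 / (192 * L ^ 7), 9 * Real.sqrt 3 * σ / (64 * L ^ 7),
      15 * Real.sqrt 3 * σ / (64 * L ^ 7);
     -73 / (192 * L ^ 7), -31 / (192 * L ^ 7), 15 * Real.sqrt 3 * σ / (64 * L ^ 7),
      9 * Real.sqrt 3 * σ / (64 * L ^ 7);
     9 * Real.sqrt 3 * σ / (64 * L ^ 7), 15 * Real.sqrt 3 * σ / (64 * L ^ 7),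
      -85 / (192 * L ^ 7), -163 / (192 * L ^ 7);
     15 * Real.sqrt 3 * σ / (64 * L ^ 7), 9 * Real.sqrt 3 * σ / (64 * L ^ 7),
      -163 / (192 * L ^ 7), -85 / (192 * L ^ 7)]

/-- The Hessian matrix `H_{5,6}` at the polar relative equilibria `E₅, E₆`. -/
noncomputable def H56 (L σ : ℝ) : Matrix (Fin 4) (Fin 4) ℝ :=
  !![-107 / (192 * L ^ 7), -29 / (192 * L ^ 7), 37 * σ / (64 * Real.sqrt 3 * L ^ 7),
      19 * σ / (64 * Real.sqrt 3 * L ^ 7);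
     -29 / (192 * L ^ 7), -107 / (192 * L ^ 7), 19 * σ / (64 * Real.sqrt 3 * L ^ 7),
      37 * σ / (64 * Real.sqrt 3 * L ^ 7);
     37 * σ / (64 * Real.sqrt 3 * L ^ 7), 19 * σ / (64 * Real.sqrt 3 * L ^ 7),
      -11 / (64 * L ^ 7), 3 / (64 * L ^ 7);
     19 * σ / (64 * Real.sqrt 3 * L ^ 7), 37 * σ / (64 * Real.sqrt 3 * L ^ 7),
      3 / (64 * L ^ 7), -11 / (64 * L ^ 7)]

/- The matrix commutes with the coordinate involution `(1 2)(3 4)`, so it splits into its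
blocks on the symmetric and the antisymmetric vectors. -/
theorem Matrix.det_fin_four_of_swap_symm {R : Type*} [CommRing R] (a b c d e f : R) :
    !![a, b, c, d; b, a, d, c; c, d, e, f; d, c, f, e].det =
      ((a + b) * (e + f) - (c + d) ^ 2) * ((a - b) * (e - f) - (c - d) ^ 2) := by
  rw [det_succ_row_zero, Fin.sum_univ_four]
  simp only [det_fin_three, submatrix_apply, Fin.succAbove, Fin.succAbove_zero, of_apply, cons_val',
    cons_val, cons_val_zero, cons_val_one, cons_val_fin_one, Fin.succ_zero_eq_one,
    Fin.succ_one_eq_two, Fin.castSucc_zero, Fin.castSucc_one, Fin.lt_one_iff, Fin.isValue,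
    Fin.reduceSucc, Fin.reduceCastSucc, Fin.reduceLT, Fin.reduceEq, Fin.coe_ofNat_eq_mod,
    zero_lt_one, lt_self_iff_false, ↓reduceIte]
  ring

section

variable {L σ : ℝ}

-- The two blocks have determinants `5 / (18 L¹⁴)` and `1 / (16 L¹⁴)`.
theorem det_H34 (hL : L ≠ 0) (hσ : σ ^ 2 = 1) : (H34 L σ).det = 5 / (288 * L ^ 28) := by
  have h3 : √3 ^ 2 = 3 := sq_sqrt (by norm_num)
  rw [H34, det_fin_four_of_swap_symm]
  grind

-- The two blocks have determinants `-1 / (6 L¹⁴)` and `1 / (16 L¹⁴)`.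
theorem det_H56 (hL : L ≠ 0) (hσ : σ ^ 2 = 1) : (H56 L σ).det = -1 / (96 * L ^ 28) := by
  have h3 : √3 ^ 2 = 3 := sq_sqrt (by norm_num)
  rw [H56, det_fin_four_of_swap_symm]
  grind

end

/-- `det(H₃₄) = 5/(288 L²⁸)`, `det(H₅₆) = −1/(96 L²⁸)`; in particular
`det(H₃₄) = −(5/3)·det(H₅₆) ≠ 0`. -/
theorem hessian_determinants_polar (L : ℝ) (hL : 0 < L) (σ : ℝ) (hσ : σ = 1 ∨ σ = -1) :
    (H34 L σ).det = 5 / (288 * L ^ 28) ∧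
    (H56 L σ).det = -1 / (96 * L ^ 28) ∧
    (H34 L σ).det = -(5 / 3) * (H56 L σ).det ∧
    (H34 L σ).det ≠ 0 := by
  have hσ2 : σ ^ 2 = 1 := by rcases hσ with rfl | rfl <;> norm_num
  have h34 := det_H34 hL.ne' hσ2
  have h56 := det_H56 hL.ne' hσ2
  refine ⟨h34, h56, ?_, ?_⟩
  · rw [h34, h56]
    ring
  · rw [h34]
    positivity
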